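/- arXiv:1208.2787 — 2 statements merged into one kernel-verified Lean document; each statement's English description precedes it below -/
import Mathlib

section
/- (Multi-round preservation of the MDS property) Let n ≥ 4 and k = n−2. There exists q_0 depending only on n such that for every finite field F_q with q ≥ q_0 the following holds: start from any configuration of n nodes over F_q, each storing two chunks in W = F_q^{2k}, such that every collection of 2k of the 2n stored chunks is linearly independent (the initial Reed–Solomon state). Then for every (arbitrarily long) sequence of failed nodes l_1, l_2, …, l_r there exists a sequence of uncoded repairs — the t-th repair replaces node l_t's two chunks by two F_q-linear combinations of a set of n−1 chunks consisting of one chunk from each node other than l_t — such that after every round of repair the configuration satisfies the MDS property. -/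
/-!
MDS alone is not preserved by uncoded repair, so one carries a stronger invariant
(`RepairInvariant`): besides MDS, for every node `l` there is a selection `f` of one chunk
per node such that, for any two further nodes `a`, `b`, the chunks of the remaining `n - 3`
nodes together with the selected chunks of `a` and `b` are decodable. Node `l` is repaired
from the chunks selected by `f`. Every set of chunks that has to be decodable afterwards
(the MDS sets, and for `m ≠ l` the sets built from the complementary selection
`fun i => f i + 1`) becomes decodable for 0/1 coefficients that merely copy two selected
chunks into node `l`. Decodability of `2k` chunks is the nonvanishing of a determinant of
degree `≤ 2k` in the coefficients; a product of at most `binom(2n, 2k)` such nonzero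
polynomials has degree `< q`, so it does not vanish at every coefficient vector, and one
choice of coefficients works for all sets at once.
-/

/-- A collection of chunks is decodable if the corresponding vectors in `W = Fq^{2k}`
are linearly independent. -/
def Decodable {n d : ℕ} {Fq : Type*} [Field Fq]
    (P : Fin n → Fin 2 → Fin d → Fq) (C : Finset (Fin n × Fin 2)) : Prop :=
  LinearIndependent Fq (fun x : {y // y ∈ C} => P x.1.1 x.1.2)

/-- MDS property (k = n-2): for every `k` of the `n` nodes, the `2k` chunks stored on
those nodes are decodable. -/
def MDS (n : ℕ) {Fq : Type*} [Field Fq]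
    (P : Fin n → Fin 2 → Fin (2 * (n - 2)) → Fq) : Prop :=
  ∀ S : Finset (Fin n), S.card = n - 2 → Decodable P (S ×ˢ Finset.univ)

open Finset MvPolynomial

theorem exists_fin_chain {α M : Type*} (I : α → Prop) (R : M → α → α → Prop)
    (hstep : ∀ a, I a → ∀ m, ∃ b, I b ∧ R m a b) {a₀ : α} (h₀ : I a₀) :
    ∀ (r : ℕ) (l : Fin r → M), ∃ seq : Fin (r + 1) → α, seq 0 = a₀ ∧ (∀ t, I (seq t)) ∧
      ∀ t : Fin r, R (l t) (seq t.castSucc) (seq t.succ)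
  | 0, _ => ⟨fun _ => a₀, rfl, fun _ => h₀, fun t => t.elim0⟩
  | r + 1, l => by
    obtain ⟨seq, hseq₀, hI, hR⟩ := exists_fin_chain I R hstep h₀ r (Fin.init l)
    obtain ⟨b, hb, hRb⟩ := hstep _ (hI (Fin.last r)) (l (Fin.last r))
    refine ⟨Fin.snoc seq b, ?_, Fin.lastCases ?_ fun t => ?_, Fin.lastCases ?_ fun t => ?_⟩
    · simpa using hseq₀
    · simpa using hb
    · simpa using hI t
    · simpa using hRb
    · rw [Fin.succ_castSucc]
      simp only [Fin.snoc_castSucc]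
      exact hR t

namespace MvPolynomial

variable {R σ : Type*} [CommRing R]

theorem totalDegree_det_le {m : Type*} [Fintype m] [DecidableEq m] {k : ℕ}
    (M : Matrix m m (MvPolynomial σ R)) (hM : ∀ i j, (M i j).totalDegree ≤ k) :
    M.det.totalDegree ≤ Fintype.card m * k := by
  rw [Matrix.det_apply]
  refine (totalDegree_finsetSum _ _).trans (Finset.sup_le fun τ _ => ?_)
  refine (totalDegree_smul_le _ _).trans ((totalDegree_finsetProd _ _).trans ?_)
  simpa using Finset.sum_le_sum fun i (_ : i ∈ univ) => hM (τ i) i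

theorem exists_eval_ne_zero_of_totalDegree_lt [IsDomain R] [Fintype R] [Finite σ]
    {p : MvPolynomial σ R} (hp : p ≠ 0) (hdeg : p.totalDegree < Fintype.card R) :
    ∃ v, eval v p ≠ 0 := by
  by_contra! h
  exact hp <| eq_zero_of_eval_zero_at_prod_finset p (fun _ => univ)
    (fun i => (degreeOf_le_totalDegree p i).trans_lt hdeg) fun v _ => h v

theorem exists_forall_eval_ne_zero [IsDomain R] [Fintype R] [Finite σ] {ι : Type*}
    (s : Finset ι) (p : ι → MvPolynomial σ R) (hp : ∀ i ∈ s, p i ≠ 0)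
    (hdeg : ∑ i ∈ s, (p i).totalDegree < Fintype.card R) :
    ∃ v, ∀ i ∈ s, eval v (p i) ≠ 0 := by
  obtain ⟨v, hv⟩ := exists_eval_ne_zero_of_totalDegree_lt (prod_ne_zero_iff.2 hp)
    ((totalDegree_finsetProd s p).trans_lt hdeg)
  exact ⟨v, prod_ne_zero_iff.1 (by rwa [map_prod] at hv)⟩

end MvPolynomial

section Decodable

variable {n d : ℕ} {F : Type*} [Field F]

theorem decodable_iff_linearIndepOn {P : Fin n → Fin 2 → Fin d → F}
    {C : Finset (Fin n × Fin 2)} :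
    Decodable P C ↔ LinearIndepOn F (fun x => P x.1 x.2) (C : Set (Fin n × Fin 2)) :=
  Iff.rfl

theorem Decodable.congr {P Q : Fin n → Fin 2 → Fin d → F} {C : Finset (Fin n × Fin 2)}
    (hP : Decodable P C) (h : ∀ x ∈ C, P x.1 x.2 = Q x.1 x.2) : Decodable Q C :=
  decodable_iff_linearIndepOn.2 <| (decodable_iff_linearIndepOn.1 hP).congr h

theorem Decodable.of_mapsTo {P Q : Fin n → Fin 2 → Fin d → F} {C D : Finset (Fin n × Fin 2)}
    (hD : Decodable P D) (g : Fin n × Fin 2 → Fin n × Fin 2) (hmaps : Set.MapsTo g C D)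
    (hinj : Set.InjOn g C) (hQ : ∀ x ∈ C, Q x.1 x.2 = P (g x).1 (g x).2) : Decodable Q C :=
  decodable_iff_linearIndepOn.2 <|
    ((decodable_iff_linearIndepOn.1 hD |>.mono hmaps.image_subset).comp_of_image hinj).congr
      fun x hx => (hQ x hx).symm

theorem exists_totalDegree_le_decodable_iff {σ : Type*}
    (W : Fin n → Fin 2 → Fin d → MvPolynomial σ F)
    (hW : ∀ i c j, (W i c j).totalDegree ≤ 1) (C : Finset (Fin n × Fin 2)) (hC : #C = d) :
    ∃ p : MvPolynomial σ F, p.totalDegree ≤ d ∧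
      ∀ v, Decodable (fun i c j => eval v (W i c j)) C ↔ eval v p ≠ 0 := by
  let e : Fin d ≃ C := (C.equivFin.trans (finCongr hC)).symm
  let M : Matrix (Fin d) (Fin d) (MvPolynomial σ F) := .of fun k j => W (e k).1.1 (e k).1.2 j
  refine ⟨M.det, by simpa using totalDegree_det_le M fun k j => hW _ _ j, fun v => ?_⟩
  rw [← isUnit_iff_ne_zero, RingHom.map_det, ← Matrix.isUnit_iff_isUnit_det,
    ← Matrix.linearIndependent_rows_iff_isUnit, Decodable, ← linearIndependent_equiv e]
  rfl

theorem exists_forall_decodable_of_exists [Fintype F] {σ : Type*} [Finite σ]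
    (W : Fin n → Fin 2 → Fin d → MvPolynomial σ F) (hW : ∀ i c j, (W i c j).totalDegree ≤ 1)
    (hq : (n * 2).choose d * d < Fintype.card F) :
    ∃ v : σ → F, ∀ C : Finset (Fin n × Fin 2), #C = d →
      (∃ w, Decodable (fun i c j => eval w (W i c j)) C) →
        Decodable (fun i c j => eval v (W i c j)) C := by
  classical
  let 𝒞 := (univ.powersetCard d).filter fun C => ∃ w, Decodable (fun i c j => eval w (W i c j)) C
  have hcard : ∀ C ∈ 𝒞, #C = d := fun C hC => (mem_powersetCard.1 (mem_filter.1 hC).1).2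
  choose p hpdeg hp using fun C hC => exists_totalDegree_le_decodable_iff W hW C (hcard C hC)
  obtain ⟨v, hv⟩ := exists_forall_eval_ne_zero 𝒞.attach (fun C => p C.1 C.2)
    (fun C _ => by
      obtain ⟨w, hw⟩ := (mem_filter.1 C.2).2
      exact fun h0 => (hp C.1 C.2 w).1 hw (by rw [h0, map_zero]))
    (calc ∑ C ∈ 𝒞.attach, (p C.1 C.2).totalDegree ≤ ∑ _C ∈ 𝒞.attach, d :=
          sum_le_sum fun C _ => hpdeg C.1 C.2
      _ ≤ (n * 2).choose d * d := by
          rw [sum_const, card_attach, smul_eq_mul]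
          gcongr
          simpa using card_le_card
            (filter_subset _ (univ.powersetCard d : Finset (Finset (Fin n × Fin 2))))
      _ < Fintype.card F := hq)
  refine ⟨v, fun C hC hw => (hp C ?_ v).2 (hv ⟨C, ?_⟩ (mem_attach _ _))⟩ <;>
    exact mem_filter.2 ⟨mem_powersetCard.2 ⟨subset_univ C, hC⟩, hw⟩

end Decodable

section Repair

variable {n : ℕ}

def repair {R V : Type*} [Semiring R] [AddCommMonoid V] [Module R V] (P : Fin n → Fin 2 → V)
    (l : Fin n) (f : Fin n → Fin 2) (γ : Fin n → Fin 2 → R) : Fin n → Fin 2 → V :=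
  Function.update P l fun c => ∑ i ∈ univ \ {l}, γ i c • P i (f i)

variable {d : ℕ} {F : Type*} [Field F]

noncomputable def symbolicRepair (P : Fin n → Fin 2 → Fin d → F) (l : Fin n)
    (f : Fin n → Fin 2) :
    Fin n → Fin 2 → Fin d → MvPolynomial (Fin n × Fin 2) F :=
  repair (R := MvPolynomial (Fin n × Fin 2) F) (fun i c j => C (P i c j)) l f fun i c => X (i, c)

theorem eval_symbolicRepair (P : Fin n → Fin 2 → Fin d → F) (l : Fin n) (f : Fin n → Fin 2)
    (v : Fin n × Fin 2 → F) (i : Fin n) (c : Fin 2) (j : Fin d) :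
    eval v (symbolicRepair P l f i c j) = repair P l f (fun i c => v (i, c)) i c j := by
  by_cases hi : i = l <;> simp [symbolicRepair, repair, hi, Finset.sum_apply, map_sum]

theorem totalDegree_symbolicRepair_le (P : Fin n → Fin 2 → Fin d → F) (l : Fin n)
    (f : Fin n → Fin 2) (i : Fin n) (c : Fin 2) (j : Fin d) :
    (symbolicRepair P l f i c j).totalDegree ≤ 1 := by
  by_cases hi : i = l
  · simp only [symbolicRepair, repair, Function.update_apply, hi, if_true, Finset.sum_apply,
      Pi.smul_apply, smul_eq_mul]
    refine (totalDegree_finsetSum _ _).trans (Finset.sup_le fun i _ => ?_)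
    exact (totalDegree_mul _ _).trans (by simp [totalDegree_X])
  · simp [symbolicRepair, repair, hi]

def IsGenericRepair (P : Fin n → Fin 2 → Fin d → F) (l : Fin n) (f : Fin n → Fin 2)
    (γ : Fin n → Fin 2 → F) : Prop :=
  ∀ C : Finset (Fin n × Fin 2), #C = d →
    (∃ γ' : Fin n → Fin 2 → F, Decodable (repair P l f γ') C) → Decodable (repair P l f γ) C

theorem exists_isGenericRepair [Fintype F] (P : Fin n → Fin 2 → Fin d → F) (l : Fin n)
    (f : Fin n → Fin 2) (hq : (n * 2).choose d * d < Fintype.card F) :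
    ∃ γ, IsGenericRepair P l f γ := by
  obtain ⟨v, hv⟩ := exists_forall_decodable_of_exists _ (totalDegree_symbolicRepair_le P l f) hq
  refine ⟨fun i c => v (i, c), fun C hC ⟨γ', hγ'⟩ => ?_⟩
  simp only [eval_symbolicRepair] at hv
  exact hv C hC ⟨fun x => γ' x.1 x.2, hγ'⟩

theorem repair_eq_update_of_sources (P : Fin n → Fin 2 → Fin d → F) {l : Fin n}
    (f : Fin n → Fin 2) {s : Fin 2 → Fin n} (hs : ∀ c, s c ≠ l) :
    repair P l f (fun i c => if i = s c then (1 : F) else 0) =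
      Function.update P l fun c => P (s c) (f (s c)) := by
  simp [repair, ite_smul, hs]

theorem Decodable.repair_of_forall_ne {P : Fin n → Fin 2 → Fin d → F}
    {C : Finset (Fin n × Fin 2)} (hP : Decodable P C) {l : Fin n} (hl : ∀ x ∈ C, x.1 ≠ l)
    (f : Fin n → Fin 2) (γ : Fin n → Fin 2 → F) : Decodable (repair P l f γ) C :=
  hP.congr fun x hx => by simp [repair, hl x hx]

theorem exists_decodable_repair_of_sources {P : Fin n → Fin 2 → Fin d → F} {l : Fin n}
    (f : Fin n → Fin 2) (s : Fin 2 → Fin n) (hs : ∀ c, s c ≠ l) {C D : Finset (Fin n × Fin 2)}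
    (hD : Decodable P D) (hC : ∀ x ∈ C, x.1 ≠ l → x ∈ D)
    (hsrc : ∀ c, (l, c) ∈ C → (s c, f (s c)) ∈ D ∧ (s c, f (s c)) ∉ C)
    (hinj : ∀ c c', (l, c) ∈ C → (l, c') ∈ C → s c = s c' → c = c') :
    ∃ γ : Fin n → Fin 2 → F, Decodable (repair P l f γ) C := by
  refine ⟨fun i c => if i = s c then 1 else 0, ?_⟩
  rw [repair_eq_update_of_sources P f hs]
  refine hD.of_mapsTo (fun x => if x.1 = l then (s x.2, f (s x.2)) else x) ?_ ?_ ?_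
  · rintro ⟨i, c⟩ hx
    by_cases hi : i = l
    · subst hi
      simpa using (hsrc c hx).1
    · simpa [hi] using hC _ hx hi
  · rintro ⟨i, c⟩ hx ⟨i', c'⟩ hx' h
    by_cases hi : i = l <;> by_cases hi' : i' = l <;> simp only [hi, hi', if_true, if_false] at h
    · subst hi hi'
      rw [hinj c c' hx hx' (Prod.ext_iff.1 h).1]
    · exact absurd (h ▸ hx') (hsrc c (hi ▸ hx)).2
    · exact absurd (h ▸ hx) (hsrc c' (hi' ▸ hx')).2
    · exact h
  · rintro ⟨i, c⟩ -
    by_cases hi : i = l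
    · subst hi
      simp
    · simp [hi]

end Repair

section Invariant

variable {n d : ℕ} {F : Type*} [Field F]

def chunksExcept (a b : Fin n) : Finset (Fin n × Fin 2) :=
  ({a, b}ᶜ : Finset (Fin n)) ×ˢ univ

def chunksExceptPicked (l : Fin n) (f : Fin n → Fin 2) (a b : Fin n) : Finset (Fin n × Fin 2) :=
  ({l, a, b}ᶜ : Finset (Fin n)) ×ˢ univ ∪ {(a, f a), (b, f b)}

@[simp]
theorem mem_chunksExcept {a b : Fin n} {x : Fin n × Fin 2} :
    x ∈ chunksExcept a b ↔ x.1 ≠ a ∧ x.1 ≠ b := by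
  simp [chunksExcept]

@[simp]
theorem mem_chunksExceptPicked {l a b : Fin n} {f : Fin n → Fin 2} {x : Fin n × Fin 2} :
    x ∈ chunksExceptPicked l f a b ↔
      (x.1 ≠ l ∧ x.1 ≠ a ∧ x.1 ≠ b) ∨ x = (a, f a) ∨ x = (b, f b) := by
  simp only [chunksExceptPicked, mem_union, mem_product, mem_compl, mem_insert, mem_singleton,
    mem_univ, and_true]
  tauto

theorem card_chunksExcept {a b : Fin n} (hab : a ≠ b) : #(chunksExcept a b) = 2 * (n - 2) := by
  rw [chunksExcept, card_product, card_compl, card_pair hab]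
  simp [mul_comm]

theorem card_chunksExceptPicked {l a b : Fin n} (f : Fin n → Fin 2) (hab : a ≠ b) (hal : a ≠ l)
    (hbl : b ≠ l) : #(chunksExceptPicked l f a b) = 2 * (n - 2) := by
  have h3 : #({l, a, b} : Finset (Fin n)) = 3 := by
    rw [card_insert_of_notMem (by simp [hal.symm, hbl.symm]), card_pair hab]
  have h3n : 3 ≤ n := by simpa [h3] using card_le_univ ({l, a, b} : Finset (Fin n))
  rw [chunksExceptPicked, card_union_of_disjoint (by simp), card_product, card_compl, h3,
    card_pair (by simp [hab])]
  simp only [Fintype.card_fin, card_univ]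
  omega

def RepairInvariant (P : Fin n → Fin 2 → Fin d → F) : Prop :=
  (∀ a b, a ≠ b → Decodable P (chunksExcept a b)) ∧
    ∀ l, ∃ f : Fin n → Fin 2, ∀ a b, a ≠ b → a ≠ l → b ≠ l →
      Decodable P (chunksExceptPicked l f a b)

theorem repairInvariant_of_forall_decodable {P : Fin n → Fin 2 → Fin (2 * (n - 2)) → F}
    (hP : ∀ C : Finset (Fin n × Fin 2), #C = 2 * (n - 2) → Decodable P C) :
    RepairInvariant P :=
  ⟨fun _ _ hab => hP _ (card_chunksExcept hab),
    fun _ => ⟨0, fun _ _ hab hal hbl => hP _ (card_chunksExceptPicked _ hab hal hbl)⟩⟩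

theorem RepairInvariant.mds (hn : 2 ≤ n) {P : Fin n → Fin 2 → Fin (2 * (n - 2)) → F}
    (hP : RepairInvariant P) : MDS n P := by
  intro S hS
  obtain ⟨a, b, hab, hSc⟩ := card_eq_two.1 (show #Sᶜ = 2 by rw [card_compl, hS]; simp; omega)
  rw [← compl_compl S, hSc]
  exact hP.1 a b hab

theorem IsGenericRepair.decodable_chunksExcept {P : Fin n → Fin 2 → Fin (2 * (n - 2)) → F}
    {l : Fin n} {f : Fin n → Fin 2} {γ : Fin n → Fin 2 → F} (hγ : IsGenericRepair P l f γ)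
    (hf : ∀ a b, a ≠ b → a ≠ l → b ≠ l → Decodable P (chunksExceptPicked l f a b))
    {a b : Fin n} (hab : a ≠ b) (hal : a ≠ l) (hbl : b ≠ l) :
    Decodable (repair P l f γ) (chunksExcept a b) := by
  refine hγ _ (card_chunksExcept hab) ?_
  -- copying `(a, f a)` and `(b, f b)` into node `l` turns this set into the selected set of `l`
  refine exists_decodable_repair_of_sources f ![a, b] ?_ (hf a b hab hal hbl) ?_ ?_ ?_ <;>
    simp [Fin.forall_fin_two] <;> grind

theorem IsGenericRepair.decodable_chunksExceptPicked
    {P : Fin n → Fin 2 → Fin (2 * (n - 2)) → F} {l : Fin n} {f : Fin n → Fin 2}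
    {γ : Fin n → Fin 2 → F} (hγ : IsGenericRepair P l f γ) {m : Fin n}
    (hP : Decodable P (chunksExcept l m)) {a b : Fin n} (hab : a ≠ b) (ham : a ≠ m)
    (hbm : b ≠ m) :
    Decodable (repair P l f γ) (chunksExceptPicked m (fun i => f i + 1) a b) := by
  have hother : ∀ x y : Fin 2, x = y + 1 ↔ x ≠ y := by decide
  refine hγ _ (card_chunksExceptPicked _ hab ham hbm) ?_
  -- copy `(a, f a)` and `(b, f b)` into node `l`; the set holds the other chunks of `a` and `b`.
  -- If `l` is `a` or `b`, the set holds a single chunk of `l`, which copies the other node.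
  refine exists_decodable_repair_of_sources f
    ![if a = l then b else a, if b = l then a else b] ?_ hP ?_ ?_ ?_ <;>
    simp [Fin.forall_fin_two, hother] <;> grind

theorem RepairInvariant.exists_repair [Fintype F] {P : Fin n → Fin 2 → Fin (2 * (n - 2)) → F}
    (hP : RepairInvariant P) (l : Fin n)
    (hq : (n * 2).choose (2 * (n - 2)) * (2 * (n - 2)) < Fintype.card F) :
    ∃ (f : Fin n → Fin 2) (γ : Fin n → Fin 2 → F), RepairInvariant (repair P l f γ) := by
  obtain ⟨f, hf⟩ := hP.2 l
  obtain ⟨γ, hγ⟩ := exists_isGenericRepair P l f hq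
  refine ⟨f, γ, fun a b hab => ?_, fun m => ?_⟩
  · by_cases hl : a = l ∨ b = l
    · exact (hP.1 a b hab).repair_of_forall_ne (by aesop) f γ
    · exact hγ.decodable_chunksExcept hf hab (not_or.1 hl).1 (not_or.1 hl).2
  · by_cases hm : m = l
    · subst hm
      exact ⟨f, fun a b hab ha hb => (hf a b hab ha hb).repair_of_forall_ne (by aesop) f γ⟩
    · exact ⟨fun i => f i + 1, fun a b hab ha hb =>
        hγ.decodable_chunksExceptPicked (hP.1 l m (Ne.symm hm)) hab ha hb⟩

end Invariant

/-- multi-round preservation of the MDS property: there exists `q₀`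
depending only on `n` such that over any finite field with at least `q₀` elements,
starting from any configuration in which every collection of `2k` of the `2n`
stored chunks is linearly independent (the initial Reed–Solomon state), for every
sequence of failed nodes `l 0, …, l (r-1)` there exists a sequence of uncoded
repairs — the `t`-th repair replaces node `l t`'s two chunks by two linear
combinations of one chunk from each node other than `l t` — such that after every
round of repair the configuration satisfies the MDS property. -/
theorem stmt6 (n : ℕ) (hn : 4 ≤ n) :
    ∃ q0 : ℕ, ∀ (Fq : Type) [Field Fq] [Fintype Fq], q0 ≤ Fintype.card Fq →
      ∀ P0 : Fin n → Fin 2 → Fin (2 * (n - 2)) → Fq,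
        (∀ C : Finset (Fin n × Fin 2), C.card = 2 * (n - 2) → Decodable P0 C) →
        ∀ (r : ℕ) (l : Fin r → Fin n),
          ∃ Pseq : Fin (r + 1) → (Fin n → Fin 2 → Fin (2 * (n - 2)) → Fq),
            Pseq 0 = P0 ∧
            ∀ t : Fin r,
              (∃ (f : Fin n → Fin 2) (γ : Fin n → Fin 2 → Fq),
                ∀ i j, Pseq t.succ i j =
                  if i = l t then
                    ∑ i' ∈ Finset.univ \ {l t}, γ i' j • Pseq t.castSucc i' (f i')
                  else Pseq t.castSucc i j) ∧
              MDS n (Pseq t.succ) := by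
  refine ⟨(n * 2).choose (2 * (n - 2)) * (2 * (n - 2)) + 1, fun Fq _ _ hq P0 hP0 r l => ?_⟩
  obtain ⟨Pseq, h0, hI, hR⟩ := exists_fin_chain RepairInvariant
    (fun m P P' => ∃ (f : Fin n → Fin 2) (γ : Fin n → Fin 2 → Fq), P' = repair P m f γ)
    (fun P (hP : RepairInvariant P) m =>
      let ⟨f, γ, h⟩ := hP.exists_repair m hq
      ⟨_, h, f, γ, rfl⟩)
    (repairInvariant_of_forall_decodable hP0) r l
  refine ⟨Pseq, h0, fun t => ⟨?_, (hI t.succ).mds (by omega)⟩⟩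
  obtain ⟨f, γ, h⟩ := hR t
  exact ⟨f, γ, fun i j => by rw [h, repair, Function.update_apply]; split_ifs <;> rfl⟩
end

section
/- (Existence of encoding coefficients for the deterministic construction) Let k ≥ 2. There exists q_0, depending only on k, such that for every finite field F_q with q ≥ q_0 and every family of scalars λ^{(i′)}_{i,1} ∈ F_q indexed by ordered pairs of distinct i, i′ ∈ {2,…,k+2}, there exist γ_{i,1}, γ_{i,2} ∈ F_q for i ∈ {2,…,k+2} simultaneously satisfying: (i) γ_{i,1}γ_{j,2} ≠ γ_{i,2}γ_{j,1} for all distinct i, j ∈ {2,…,k+2}; (ii) γ_{i,2} + γ_{i′,2}λ^{(i′)}_{i,1} ≠ 0 for all distinct i, i′ ∈ {2,…,k+2}; and (iii) (γ_{i,1} + γ_{i″,1}λ^{(i″)}_{i,1})(γ_{i′,2} + γ_{i″,2}λ^{(i″)}_{i′,1}) ≠ (γ_{i′,1} + γ_{i″,1}λ^{(i″)}_{i′,1})(γ_{i,2} + γ_{i″,2}λ^{(i″)}_{i,1}) for all pairwise distinct i, i′, i″ ∈ {2,…,k+2}. -/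
/-!
Each of the conditions (i)–(iii) says that a nonzero homogeneous polynomial of degree at most 2
in the unknowns `γ_{i,c}` does not vanish at `γ`. With `n = k + 1` indices there are at most
`2n² + n³` such polynomials, so their product is a nonzero homogeneous polynomial of degree at
most `6n³`; over a field with at least that many elements it has a non-root, and such a point
satisfies all the conditions at once.
-/

open MvPolynomial Finset

namespace MvPolynomial

variable {σ R : Type*} [CommRing R] [IsDomain R]

theorem exists_forall_eval_ne_zero_of_isHomogeneous (s : Finset (MvPolynomial σ R)) (d : ℕ)
    (hs : ∀ p ∈ s, p ≠ 0 ∧ ∃ n ≤ d, p.IsHomogeneous n)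
    (hcard : ((#s * d : ℕ) : Cardinal) ≤ Cardinal.mk R) :
    ∃ x : σ → R, ∀ p ∈ s, eval x p ≠ 0 := by
  have hhom : (∏ p ∈ s, p).IsHomogeneous (∑ p ∈ s, p.totalDegree) :=
    IsHomogeneous.prod _ _ _ fun p hp => by
      obtain ⟨hp0, n, -, hn⟩ := hs p hp
      rwa [hn.totalDegree hp0]
  have hdeg : ∑ p ∈ s, p.totalDegree ≤ #s * d :=
    sum_le_card_nsmul _ _ _ fun p hp => by
      obtain ⟨-, n, hnd, hn⟩ := hs p hp
      exact hn.totalDegree_le.trans hnd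
  have hne : ∏ p ∈ s, p ≠ 0 := prod_ne_zero_iff.2 fun p hp => (hs p hp).1
  obtain ⟨x, hx⟩ : ∃ x, eval x (∏ p ∈ s, p) ≠ 0 := by
    by_contra! h
    exact hne (hhom.eq_zero_of_forall_eval_eq_zero_of_le_card h
      ((Nat.cast_le.2 hdeg).trans hcard))
  exact ⟨x, by simpa [map_prod, prod_ne_zero_iff] using hx⟩

end MvPolynomial

namespace FMSR

variable {ι R : Type*} [CommRing R]

/-- The linear form `γ_{i,c} + γ_{i'',c} λ^{(i'')}_{i,1}`, with `γ_{i,c+1}` encoded as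
`X (i, c)`. -/
noncomputable def shiftedCoeff (lam : ι → ι → R) (i i'' : ι) (c : Fin 2) :
    MvPolynomial (ι × Fin 2) R :=
  X (i, c) + X (i'', c) * C (lam i i'')

noncomputable def det2 {σ : Type*} (u v : Fin 2 → MvPolynomial σ R) : MvPolynomial σ R :=
  u 0 * v 1 - u 1 * v 0

theorem isHomogeneous_shiftedCoeff (lam : ι → ι → R) (i i'' : ι) (c : Fin 2) :
    (shiftedCoeff lam i i'' c).IsHomogeneous 1 :=
  (isHomogeneous_X _ _).add (by simpa using (isHomogeneous_X R _).mul (isHomogeneous_C _ _))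

theorem isHomogeneous_det2 {σ : Type*} {u v : Fin 2 → MvPolynomial σ R}
    (hu : ∀ c, (u c).IsHomogeneous 1) (hv : ∀ c, (v c).IsHomogeneous 1) :
    (det2 u v).IsHomogeneous 2 :=
  ((hu 0).mul (hv 1)).sub ((hu 1).mul (hv 0))

section

variable [DecidableEq ι]

theorem det2_X_ne_zero [Nontrivial R] {i j : ι} (hij : i ≠ j) :
    det2 (fun c => X (i, c)) (fun c => (X (j, c) : MvPolynomial (ι × Fin 2) R)) ≠ 0 :=
  ne_zero_of_map (f := eval (Pi.single (i, 0) 1 + Pi.single (j, 1) 1)) <| by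
    simp [det2, hij, hij.symm]

theorem shiftedCoeff_ne_zero [Nontrivial R] (lam : ι → ι → R) {i i' : ι} (hii' : i ≠ i')
    (c : Fin 2) : shiftedCoeff lam i i' c ≠ 0 :=
  ne_zero_of_map (f := eval (Pi.single (i, c) 1)) <| by
    simp [shiftedCoeff, hii'.symm]

theorem det2_shiftedCoeff_ne_zero [Nontrivial R] (lam : ι → ι → R) {i i' i'' : ι}
    (hii' : i ≠ i') (hii'' : i ≠ i'') (hi'i'' : i' ≠ i'') :
    det2 (shiftedCoeff lam i i'') (shiftedCoeff lam i' i'') ≠ 0 :=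
  ne_zero_of_map (f := eval (Pi.single (i, 0) 1 + Pi.single (i', 1) 1)) <| by
    simp [det2, shiftedCoeff, hii', hii'.symm, hii''.symm, hi'i''.symm]

def distinctTriples (S : Finset ι) : Finset (ι × ι × ι) :=
  (S ×ˢ S ×ˢ S).filter fun t => t.1 ≠ t.2.1 ∧ t.1 ≠ t.2.2 ∧ t.2.1 ≠ t.2.2

theorem card_distinctTriples_le (S : Finset ι) : #(distinctTriples S) ≤ #S ^ 3 :=
  (card_filter_le _ _).trans (by simp [card_product, pow_three])

variable [DecidableEq R]

/-- The polynomials whose non-vanishing at `γ` are the conditions (i), (ii), (iii). -/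
noncomputable def conditionPolys (S : Finset ι) (lam : ι → ι → R) :
    Finset (MvPolynomial (ι × Fin 2) R) :=
  S.offDiag.image (fun p => det2 (fun c => X (p.1, c)) (fun c => X (p.2, c))) ∪
    S.offDiag.image (fun p => shiftedCoeff lam p.1 p.2 1) ∪
    (distinctTriples S).image
      (fun t => det2 (shiftedCoeff lam t.1 t.2.2) (shiftedCoeff lam t.2.1 t.2.2))

theorem card_conditionPolys_mul_two_le (S : Finset ι) (lam : ι → ι → R) :
    #(conditionPolys S lam) * 2 ≤ 6 * #S ^ 3 := by
  have hoff : #S.offDiag ≤ #S ^ 2 := by rw [offDiag_card, sq]; exact Nat.sub_le _ _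
  have htriples := card_distinctTriples_le S
  have hsq : #S ^ 2 ≤ #S ^ 3 := by
    rcases (#S).eq_zero_or_pos with h | h
    · simp [h]
    · exact Nat.pow_le_pow_right h (by norm_num)
  have hcard : #(conditionPolys S lam) ≤ #S.offDiag + #S.offDiag + #(distinctTriples S) :=
    (card_union_le _ _).trans (add_le_add ((card_union_le _ _).trans
      (add_le_add card_image_le card_image_le)) card_image_le)
  omega

theorem conditionPolys_spec [Nontrivial R] (S : Finset ι) (lam : ι → ι → R) :
    ∀ p ∈ conditionPolys S lam, p ≠ 0 ∧ ∃ n ≤ 2, p.IsHomogeneous n := by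
  intro p hp
  simp only [conditionPolys, mem_union, mem_image] at hp
  rcases hp with (⟨⟨i, j⟩, hij, rfl⟩ | ⟨⟨i, j⟩, hij, rfl⟩) | ⟨⟨i, i', i''⟩, ht, rfl⟩
  · exact ⟨det2_X_ne_zero (mem_offDiag.1 hij).2.2, 2, le_rfl,
      isHomogeneous_det2 (fun _ => isHomogeneous_X _ _) (fun _ => isHomogeneous_X _ _)⟩
  · exact ⟨shiftedCoeff_ne_zero lam (mem_offDiag.1 hij).2.2 1, 1, one_le_two,
      isHomogeneous_shiftedCoeff lam i j 1⟩
  · obtain ⟨-, hii', hii'', hi'i''⟩ := mem_filter.1 ht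
    exact ⟨det2_shiftedCoeff_ne_zero lam hii' hii'' hi'i'', 2, le_rfl,
      isHomogeneous_det2 (isHomogeneous_shiftedCoeff lam i i'')
        (isHomogeneous_shiftedCoeff lam i' i'')⟩

end

theorem exists_coeffs_of_card_le [IsDomain R] (S : Finset ι) (lam : ι → ι → R)
    (hR : ((6 * #S ^ 3 : ℕ) : Cardinal) ≤ Cardinal.mk R) :
    ∃ γ : ι → Fin 2 → R,
      (∀ i ∈ S, ∀ j ∈ S, i ≠ j → γ i 0 * γ j 1 ≠ γ i 1 * γ j 0) ∧
      (∀ i ∈ S, ∀ i' ∈ S, i ≠ i' → γ i 1 + γ i' 1 * lam i i' ≠ 0) ∧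
      (∀ i ∈ S, ∀ i' ∈ S, ∀ i'' ∈ S, i ≠ i' → i ≠ i'' → i' ≠ i'' →
        (γ i 0 + γ i'' 0 * lam i i'') * (γ i' 1 + γ i'' 1 * lam i' i'') ≠
        (γ i' 0 + γ i'' 0 * lam i' i'') * (γ i 1 + γ i'' 1 * lam i i'')) := by
  classical
  obtain ⟨x, hx⟩ := exists_forall_eval_ne_zero_of_isHomogeneous _ 2 (conditionPolys_spec S lam)
    ((Nat.cast_le.2 (card_conditionPolys_mul_two_le S lam)).trans hR)
  refine ⟨Function.curry x, fun i hi j hj hij => ?_, fun i hi i' hi' hii' => ?_,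
    fun i hi i' hi' i'' hi'' hii' hii'' hi'i'' => ?_⟩
  · have := hx _ <| by
      unfold conditionPolys
      exact mem_union_left _ <| mem_union_left _ <| mem_image_of_mem _
        (show (i, j) ∈ S.offDiag from mem_offDiag.2 ⟨hi, hj, hij⟩)
    simpa [det2, sub_ne_zero] using this
  · have := hx _ <| by
      unfold conditionPolys
      exact mem_union_left _ <| mem_union_right _ <| mem_image_of_mem _
        (show (i, i') ∈ S.offDiag from mem_offDiag.2 ⟨hi, hi', hii'⟩)
    simpa [shiftedCoeff] using this
  · have := hx _ <| by
      unfold conditionPolys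
      exact mem_union_right _ <| mem_image_of_mem (a := (i, i', i'')) _ <| mem_filter.2
        ⟨mem_product.2 ⟨hi, mem_product.2 ⟨hi', hi''⟩⟩, hii', hii'', hi'i''⟩
    simp only [det2, shiftedCoeff, map_sub, map_mul, map_add, eval_X, eval_C,
      sub_ne_zero] at this
    simpa only [Function.curry_apply, mul_comm (x (i', 0) + _)] using this

end FMSR

theorem stmt11_general (k : ℕ) :
    ∃ q0 : ℕ, ∀ (Fq : Type) [Field Fq] [Fintype Fq], q0 ≤ Fintype.card Fq →
      ∀ lam : ℕ → ℕ → Fq,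
        ∃ γ : ℕ → Fin 2 → Fq,
          (∀ i ∈ Finset.Icc 2 (k + 2), ∀ j ∈ Finset.Icc 2 (k + 2), i ≠ j →
            γ i 0 * γ j 1 ≠ γ i 1 * γ j 0) ∧
          (∀ i ∈ Finset.Icc 2 (k + 2), ∀ i' ∈ Finset.Icc 2 (k + 2), i ≠ i' →
            γ i 1 + γ i' 1 * lam i i' ≠ 0) ∧
          (∀ i ∈ Finset.Icc 2 (k + 2), ∀ i' ∈ Finset.Icc 2 (k + 2),
            ∀ i'' ∈ Finset.Icc 2 (k + 2), i ≠ i' → i ≠ i'' → i' ≠ i'' →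
            (γ i 0 + γ i'' 0 * lam i i'') * (γ i' 1 + γ i'' 1 * lam i' i'') ≠
            (γ i' 0 + γ i'' 0 * lam i' i'') * (γ i 1 + γ i'' 1 * lam i i'')) := by
  refine ⟨6 * (k + 1) ^ 3, fun Fq _ _ hq lam => ?_⟩
  apply FMSR.exists_coeffs_of_card_le (Finset.Icc 2 (k + 2)) lam
  rw [Nat.card_Icc, Cardinal.mk_fintype, Nat.cast_le]
  simpa using hq

/-- existence of encoding coefficients for the deterministic
construction: there exists `q₀` depending only on `k` such that over any finite
field with at least `q₀` elements, for every family of scalars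
`lam i i' = λ^{(i′)}_{i,1}` indexed by ordered pairs of distinct
`i, i' ∈ {2,…,k+2}`, there exist `γ_{i,1}, γ_{i,2}` (encoded as `γ i 0, γ i 1`)
simultaneously satisfying the coefficient conditions (3), (4), (5) of the
deterministic FMSR construction. -/
theorem stmt11 (k : ℕ) (hk : 2 ≤ k) :
    ∃ q0 : ℕ, ∀ (Fq : Type) [Field Fq] [Fintype Fq], q0 ≤ Fintype.card Fq →
      ∀ lam : ℕ → ℕ → Fq,
        ∃ γ : ℕ → Fin 2 → Fq,
          (∀ i ∈ Finset.Icc 2 (k + 2), ∀ j ∈ Finset.Icc 2 (k + 2), i ≠ j →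
            γ i 0 * γ j 1 ≠ γ i 1 * γ j 0) ∧
          (∀ i ∈ Finset.Icc 2 (k + 2), ∀ i' ∈ Finset.Icc 2 (k + 2), i ≠ i' →
            γ i 1 + γ i' 1 * lam i i' ≠ 0) ∧
          (∀ i ∈ Finset.Icc 2 (k + 2), ∀ i' ∈ Finset.Icc 2 (k + 2),
            ∀ i'' ∈ Finset.Icc 2 (k + 2), i ≠ i' → i ≠ i'' → i' ≠ i'' →
            (γ i 0 + γ i'' 0 * lam i i'') * (γ i' 1 + γ i'' 1 * lam i' i'') ≠
            (γ i' 0 + γ i'' 0 * lam i' i'') * (γ i 1 + γ i'' 1 * lam i i'')) :=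
  stmt11_general k
end
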